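/- Let m ≥ 1 and let A₁, …, A_m be elements of 𝔄. Then the symmetrized products converge: lim_{n→∞} fₙ({A_j}) = exp(∑_{j=1}^m A_j), the limit being taken in the norm of 𝔄. -/

import Mathlib

/-!
Call a sequence `F` of first order `S` if `n • (F n - 1) → S`. Such a sequence satisfies
`F n ^ n → exp S`: the comparison sequence `T n = exp (S / n)` has the same first order and
`T n ^ n = exp S` exactly, while the telescoping identity
`x ^ n - y ^ n = ∑ k < n, x ^ k * (x - y) * y ^ (n - 1 - k)` and the bound
`‖x ^ k‖ ≤ ‖1‖ * exp (k * ‖x - 1‖)` give `‖F n ^ n - T n ^ n‖ = O(n * ‖F n - T n‖) = o(1)`.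
The symmetrized string has first order `∑ A j`, by induction on `m`: `n • (exp (x / n) - 1) → x`
is the derivative of `t ↦ exp (t • x)` at `0`, and
`E * P * E - 1 = (E - 1) * P * E + (P - 1) * E + (E - 1)` adds first orders.
-/

open Filter NormedSpace

/-- `fString 𝕜 A m n` is the symmetrized product string
`exp(A_m/(2n)) ⋯ exp(A₂/(2n)) · exp(A₁/n) · exp(A₂/(2n)) ⋯ exp(A_m/(2n))`,
where the elements are `A 1, …, A m`. -/
noncomputable def fString (𝕜 : Type*) [RCLike 𝕜] {𝔄 : Type*} [NormedRing 𝔄]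
    [NormedAlgebra 𝕜 𝔄] (A : ℕ → 𝔄) (m n : ℕ) : 𝔄 :=
  ((List.range' 2 (m - 1)).foldl
    (fun acc j => (expSeries 𝕜 𝔄).sum ((2 * n : 𝕜)⁻¹ • A j) * acc * (expSeries 𝕜 𝔄).sum ((2 * n : 𝕜)⁻¹ • A j))
    ((expSeries 𝕜 𝔄).sum ((n : 𝕜)⁻¹ • A 1)))

open Finset Topology

section PowerEstimates

theorem pow_sub_pow_eq_sum {R : Type*} [Ring R] (x y : R) (n : ℕ) :
    x ^ n - y ^ n = ∑ k ∈ range n, x ^ k * (x - y) * y ^ (n - 1 - k) := by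
  have htel := sum_range_sub (fun k => x ^ k * y ^ (n - k)) n
  simp only [Nat.sub_self, pow_zero, mul_one, Nat.sub_zero, one_mul] at htel
  rw [← htel]
  refine sum_congr rfl fun k hk => ?_
  have hkn := mem_range.mp hk
  obtain ⟨j, hj⟩ : ∃ j, n - k = j + 1 := ⟨n - 1 - k, by omega⟩
  rw [hj, show n - (k + 1) = j by omega, show n - 1 - k = j by omega, pow_succ, pow_succ']
  noncomm_ring

variable {R : Type*} [NormedRing R]

theorem norm_pow_le_norm_one_mul_exp (x : R) (k : ℕ) :
    ‖x ^ k‖ ≤ ‖(1 : R)‖ * Real.exp (k * ‖x - 1‖) := by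
  induction k with
  | zero => simp
  | succ k ih =>
    calc ‖x ^ (k + 1)‖ = ‖x ^ k + x ^ k * (x - 1)‖ := by rw [pow_succ]; noncomm_ring
      _ ≤ ‖x ^ k‖ * (1 + ‖x - 1‖) := by
          rw [mul_one_add]; exact (norm_add_le _ _).trans (by gcongr; exact norm_mul_le _ _)
      _ ≤ ‖(1 : R)‖ * Real.exp (k * ‖x - 1‖) * Real.exp ‖x - 1‖ := by
          gcongr
          linarith [Real.add_one_le_exp ‖x - 1‖]
      _ = ‖(1 : R)‖ * Real.exp ((k + 1 : ℕ) * ‖x - 1‖) := by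
          rw [mul_assoc, ← Real.exp_add]; push_cast; ring_nf

theorem norm_pow_sub_pow_le {x y : R} {n : ℕ} {c : ℝ} (hx : n * ‖x - 1‖ ≤ c)
    (hy : n * ‖y - 1‖ ≤ c) : ‖x ^ n - y ^ n‖ ≤ (‖(1 : R)‖ * Real.exp c) ^ 2 * (n * ‖x - y‖) := by
  have hpow {z : R} (hz : n * ‖z - 1‖ ≤ c) {k : ℕ} (hk : k ≤ n) :
      ‖z ^ k‖ ≤ ‖(1 : R)‖ * Real.exp c :=
    (norm_pow_le_norm_one_mul_exp z k).trans <| by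
      gcongr
      exact le_trans (by gcongr) hz
  rw [pow_sub_pow_eq_sum]
  calc ‖∑ k ∈ range n, x ^ k * (x - y) * y ^ (n - 1 - k)‖
      ≤ ∑ k ∈ range n, ‖x ^ k‖ * ‖x - y‖ * ‖y ^ (n - 1 - k)‖ :=
        (norm_sum_le _ _).trans <| sum_le_sum fun k _ =>
          (norm_mul_le _ _).trans (by gcongr; exact norm_mul_le _ _)
    _ ≤ ∑ _k ∈ range n, ‖(1 : R)‖ * Real.exp c * ‖x - y‖ * (‖(1 : R)‖ * Real.exp c) :=
        sum_le_sum fun k hk => by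
          have hkn := mem_range.mp hk
          gcongr
          · exact hpow hx (by omega)
          · exact hpow hy (by omega)
    _ = (‖(1 : R)‖ * Real.exp c) ^ 2 * (n * ‖x - y‖) := by
        rw [sum_const, card_range, nsmul_eq_mul]; ring

end PowerEstimates

section FirstOrder

variable {𝕜 𝔄 : Type*} [RCLike 𝕜] [NormedRing 𝔄] [NormedAlgebra 𝕜 𝔄]

theorem tendsto_of_tendsto_natCast_smul_sub {F : ℕ → 𝔄} {a S : 𝔄}
    (h : Tendsto (fun n : ℕ => (n : 𝕜) • (F n - a)) atTop (𝓝 S)) : Tendsto F atTop (𝓝 a) := by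
  have hsmall : Tendsto (fun n : ℕ => (n : 𝕜)⁻¹ • ((n : 𝕜) • (F n - a))) atTop (𝓝 0) := by
    simpa using (tendsto_inv_atTop_nhds_zero_nat (𝕜 := 𝕜)).smul h
  refine tendsto_sub_nhds_zero_iff.mp (hsmall.congr' ?_)
  filter_upwards [eventually_ne_atTop 0] with n hn
  rw [inv_smul_smul₀ (Nat.cast_ne_zero.mpr hn)]

theorem Filter.Tendsto.natCast_smul_mul_mul_sub_one {E P : ℕ → 𝔄} {a s : 𝔄}
    (hE : Tendsto (fun n : ℕ => (n : 𝕜) • (E n - 1)) atTop (𝓝 a))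
    (hP : Tendsto (fun n : ℕ => (n : 𝕜) • (P n - 1)) atTop (𝓝 s)) :
    Tendsto (fun n : ℕ => (n : 𝕜) • (E n * P n * E n - 1)) atTop (𝓝 (a + s + a)) := by
  have hE1 := tendsto_of_tendsto_natCast_smul_sub hE
  have hP1 := tendsto_of_tendsto_natCast_smul_sub hP
  have hlim := ((hE.mul (hP1.mul hE1)).add (hP.mul hE1)).add hE
  simp only [mul_one] at hlim
  refine hlim.congr fun n => ?_
  simp only [smul_mul_assoc, ← smul_add]
  congr 1
  noncomm_ring

variable [CompleteSpace 𝔄]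

variable (𝕜) in
theorem tendsto_natCast_smul_exp_inv_smul_sub_one (x : 𝔄) :
    Tendsto (fun n : ℕ => (n : 𝕜) • (exp ((n : 𝕜)⁻¹ • x) - 1)) atTop (𝓝 x) := by
  have hslope := (hasDerivAt_exp_smul_const (𝕂 := 𝕜) x 0).tendsto_slope_zero
  simp only [zero_smul, exp_zero, one_mul, zero_add] at hslope
  have hinv : Tendsto (fun n : ℕ => (n : 𝕜)⁻¹) atTop (𝓝[≠] 0) :=
    tendsto_nhdsWithin_iff.mpr ⟨tendsto_inv_atTop_nhds_zero_nat,
      (eventually_ne_atTop 0).mono fun n hn => inv_ne_zero (Nat.cast_ne_zero.mpr hn)⟩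
  exact (hslope.comp hinv).congr fun n => by simp only [Function.comp_apply, inv_inv]

theorem tendsto_pow_of_tendsto_natCast_smul_sub_one {F : ℕ → 𝔄} {S : 𝔄}
    (h : Tendsto (fun n : ℕ => (n : 𝕜) • (F n - 1)) atTop (𝓝 S)) :
    Tendsto (fun n : ℕ => F n ^ n) atTop (𝓝 (exp S)) := by
  set T : ℕ → 𝔄 := fun n => exp ((n : 𝕜)⁻¹ • S)
  have hT := tendsto_natCast_smul_exp_inv_smul_sub_one 𝕜 S
  have hTpow : ∀ᶠ n in atTop, T n ^ n = exp S := by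
    -- `exp_nsmul` needs a `ℚ`-algebra structure; `exp` itself does not depend on it.
    let +nondep : NormedAlgebra ℚ 𝔄 := .restrictScalars ℚ 𝕜 𝔄
    filter_upwards [eventually_ne_atTop 0] with n hn
    rw [← exp_nsmul, ← Nat.cast_smul_eq_nsmul 𝕜, smul_inv_smul₀ (Nat.cast_ne_zero.mpr hn)]
  have hbound {G : ℕ → 𝔄} (hG : Tendsto (fun n : ℕ => (n : 𝕜) • (G n - 1)) atTop (𝓝 S)) :
      ∀ᶠ n in atTop, n * ‖G n - 1‖ ≤ ‖S‖ + 1 := by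
    filter_upwards [hG.norm.eventually (eventually_le_nhds (lt_add_one ‖S‖))] with n hn
    rwa [norm_smul, RCLike.norm_natCast] at hn
  have hclose : Tendsto (fun n : ℕ => (n : ℝ) * ‖F n - T n‖) atTop (𝓝 0) := by
    have := (h.sub hT).norm
    rw [sub_self, norm_zero] at this
    refine this.congr fun n => ?_
    rw [← smul_sub, sub_sub_sub_cancel_right, norm_smul, RCLike.norm_natCast]
  have hpow : Tendsto (fun n : ℕ => F n ^ n - T n ^ n) atTop (𝓝 0) := by
    refine squeeze_zero_norm' ?_
      (by simpa using hclose.const_mul ((‖(1 : 𝔄)‖ * Real.exp (‖S‖ + 1)) ^ 2))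
    filter_upwards [hbound h, hbound hT] with n hFn hTn
    exact norm_pow_sub_pow_le hFn hTn
  simpa using (hpow.add (tendsto_const_nhds.congr' (hTpow.mono fun n hn => hn.symm)))
    |>.congr fun n => sub_add_cancel (F n ^ n) (T n ^ n)

end FirstOrder

section SymmetrizedString

variable (𝕜 : Type*) [RCLike 𝕜] {𝔄 : Type*} [NormedRing 𝔄] [NormedAlgebra 𝕜 𝔄]

theorem fString_one (A : ℕ → 𝔄) (n : ℕ) : fString 𝕜 A 1 n = exp ((n : 𝕜)⁻¹ • A 1) := by
  simp [fString, ← exp_eq_expSeries_sum 𝕜]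

theorem fString_succ (A : ℕ → 𝔄) {m : ℕ} (hm : 1 ≤ m) (n : ℕ) :
    fString 𝕜 A (m + 1) n =
      exp ((2 * n : 𝕜)⁻¹ • A (m + 1)) * fString 𝕜 A m n * exp ((2 * n : 𝕜)⁻¹ • A (m + 1)) := by
  obtain ⟨k, rfl⟩ : ∃ k, m = k + 1 := ⟨m - 1, by omega⟩
  simp only [fString, ← exp_eq_expSeries_sum 𝕜, Nat.add_sub_cancel, List.range'_concat,
    List.foldl_append]
  rw [show 2 + 1 * k = k + 1 + 1 by omega]
  rfl

variable [CompleteSpace 𝔄]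

theorem tendsto_natCast_smul_fString_sub_one (A : ℕ → 𝔄) {m : ℕ} (hm : 1 ≤ m) :
    Tendsto (fun n : ℕ => (n : 𝕜) • (fString 𝕜 A m n - 1)) atTop (𝓝 (∑ j ∈ Icc 1 m, A j)) := by
  induction m, hm using Nat.le_induction with
  | base => simpa [fString_one] using tendsto_natCast_smul_exp_inv_smul_sub_one 𝕜 (A 1)
  | succ m hm ih =>
    have hE : Tendsto (fun n : ℕ => (n : 𝕜) • (exp ((2 * n : 𝕜)⁻¹ • A (m + 1)) - 1)) atTop
        (𝓝 ((2 : 𝕜)⁻¹ • A (m + 1))) := by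
      simpa only [mul_inv_rev, mul_smul] using
        tendsto_natCast_smul_exp_inv_smul_sub_one 𝕜 ((2 : 𝕜)⁻¹ • A (m + 1))
    have hsum : (2 : 𝕜)⁻¹ • A (m + 1) + ∑ j ∈ Icc 1 m, A j + (2 : 𝕜)⁻¹ • A (m + 1) =
        ∑ j ∈ Icc 1 (m + 1), A j := by
      rw [sum_Icc_succ_top (by omega)]
      module
    simpa only [fString_succ 𝕜 A hm, hsum] using hE.natCast_smul_mul_mul_sub_one ih

end SymmetrizedString

theorem lieTrotter_fString (𝕜 : Type*) [RCLike 𝕜] {𝔄 : Type*} [NormedRing 𝔄]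
    [NormedAlgebra 𝕜 𝔄] [CompleteSpace 𝔄] (m : ℕ) (hm : 1 ≤ m) (A : ℕ → 𝔄) :
    Filter.Tendsto (fun n : ℕ => (fString 𝕜 A m n) ^ n) Filter.atTop
      (nhds ((expSeries 𝕜 𝔄).sum (∑ j ∈ Finset.Icc 1 m, A j))) := by
  rw [← exp_eq_expSeries_sum 𝕜]
  exact tendsto_pow_of_tendsto_natCast_smul_sub_one
    (tendsto_natCast_smul_fString_sub_one 𝕜 A hm)
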